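/- There is no natural number n > 16 such that φ(Q_n) = 2·(10^m − 1)/9 for some m ≥ 2, where Q_n is the n-th associated Pell number. -/

import Mathlib

def pellP : ℕ → ℕ
  | 0 => 0
  | 1 => 1
  | n + 2 => 2 * pellP (n + 1) + pellP n

def pellQ : ℕ → ℕ
  | 0 => 1
  | 1 => 1
  | n + 2 => 2 * pellQ (n + 1) + pellQ n

/-!
From `9 φ(Q_n) = 2 (10^m - 1)` with `m ≥ 2` we get `φ(Q_n) ≡ 22 (mod 40)`. As `Q_n` is odd and
`φ(Q_n) ≡ 2 (mod 4)`, `Q_n = p^a` for a prime `p ≡ 3 (mod 4)`. The identity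
`Q_n² - 2 P_n² = (-1)^n` makes `-1` a square mod `p` when `4 ∣ n`, which is impossible, and `2` a
square mod `p` when `n` is odd, so that `p ≡ 7 (mod 8)`. Because `p^4 ≡ 1 (mod 40)`, the congruence
`φ(p^a) ≡ 22 (mod 40)` forces `p^a ≡ 1 (mod 8)` if `p ≡ 3 (mod 8)` and `p^a ≡ 23 (mod 40)` if
`p ≡ 7 (mod 8)`. Both contradict the residues of the `12`-periodic sequence `Q_n mod 40`:
`Q_n ≡ 3 (mod 8)` for `n ≡ 2 (mod 4)`, and `Q_n ≢ 23 (mod 40)` for odd `n`.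
-/

open scoped Nat

lemma pellQ_succ_and_pellP_succ (n : ℕ) :
    pellQ (n + 1) = pellQ n + 2 * pellP n ∧ pellP (n + 1) = pellP n + pellQ n := by
  induction n with
  | zero => simp [pellQ, pellP]
  | succ n ih =>
    refine ⟨?_, ?_⟩
    · rw [pellQ]; omega
    · rw [pellP]; omega

lemma pellQ_succ (n : ℕ) : pellQ (n + 1) = pellQ n + 2 * pellP n :=
  (pellQ_succ_and_pellP_succ n).1

lemma pellP_succ (n : ℕ) : pellP (n + 1) = pellP n + pellQ n :=
  (pellQ_succ_and_pellP_succ n).2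

lemma pellQ_odd (n : ℕ) : Odd (pellQ n) := by
  induction n with
  | zero => simp [pellQ]
  | succ n ih => rw [pellQ_succ]; exact ih.add_even (even_two_mul _)

lemma two_lt_pellQ {n : ℕ} (hn : 2 ≤ n) : 2 < pellQ n := by
  obtain ⟨k, rfl⟩ := Nat.exists_eq_add_of_le' hn
  have := (pellQ_odd k).pos
  have := (pellQ_odd (k + 1)).pos
  rw [pellQ]
  omega

lemma pellQ_add (m n : ℕ) : pellQ (m + n) = pellQ m * pellQ n + 2 * pellP m * pellP n := by
  suffices pellQ (m + n) = pellQ m * pellQ n + 2 * pellP m * pellP n ∧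
      pellP (m + n) = pellP m * pellQ n + pellQ m * pellP n from this.1
  induction m with
  | zero => simp [pellQ, pellP]
  | succ m ih =>
    rw [Nat.add_right_comm, pellQ_succ, pellP_succ, pellQ_succ, pellP_succ, ih.1, ih.2]
    constructor <;> ring

lemma pellQ_two_mul (n : ℕ) : pellQ (2 * n) = pellQ n ^ 2 + 2 * pellP n ^ 2 := by
  rw [two_mul, pellQ_add]; ring

lemma pellQ_sq_sub_two_mul_pellP_sq {R : Type*} [CommRing R] (n : ℕ) :
    (pellQ n : R) ^ 2 - 2 * (pellP n : R) ^ 2 = (-1) ^ n := by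
  induction n with
  | zero => simp [pellQ, pellP]
  | succ n ih =>
    rw [pellQ_succ, pellP_succ, pow_succ]
    push_cast
    linear_combination -ih

lemma pellQ_add_twelve_mod_forty (n : ℕ) : pellQ (n + 12) % 40 = pellQ n % 40 := by
  rw [pellQ_add]
  have hQ : pellQ 12 = 40 * 490 + 1 := by decide
  have hP : pellP 12 = 20 * 693 := by decide
  rw [hQ, hP]
  omega

lemma pellQ_mod_forty (n : ℕ) : pellQ n % 40 = pellQ (n % 12) % 40 := by
  conv_lhs => rw [← Nat.mod_add_div n 12]
  induction n / 12 with
  | zero => rfl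
  | succ q ih => rw [Nat.mul_succ, ← Nat.add_assoc, pellQ_add_twelve_mod_forty, ih]

lemma pellQ_mod_eight_of_mod_four_eq_two {n : ℕ} (hn : n % 4 = 2) : pellQ n % 8 = 3 := by
  have key : ∀ r < 12, r % 4 = 2 → pellQ r % 40 % 8 = 3 := by decide
  rw [← Nat.mod_mod_of_dvd _ (by norm_num : 8 ∣ 40), pellQ_mod_forty]
  exact key _ (Nat.mod_lt _ (by norm_num)) (by omega)

lemma pellQ_mod_forty_ne_of_odd {n : ℕ} (hn : Odd n) : pellQ n % 40 ≠ 23 := by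
  have key : ∀ r < 12, r % 2 = 1 → pellQ r % 40 ≠ 23 := by decide
  rw [pellQ_mod_forty]
  exact key _ (Nat.mod_lt _ (by norm_num)) (by rw [Nat.odd_iff] at hn; omega)

lemma isSquare_two_of_dvd_pellQ {p n : ℕ} (hn : Odd n) (h : p ∣ pellQ n) :
    IsSquare (2 : ZMod p) := by
  have hQ : (pellQ n : ZMod p) = 0 := (ZMod.natCast_eq_zero_iff _ _).2 h
  have hP : 2 * (pellP n : ZMod p) ^ 2 = 1 := by
    linear_combination (pellQ n : ZMod p) * hQ - pellQ_sq_sub_two_mul_pellP_sq (R := ZMod p) n -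
      (hn.neg_one_pow : (-1 : ZMod p) ^ n = -1)
  exact ⟨2 * pellP n, by linear_combination -2 * hP⟩

lemma isSquare_neg_one_of_dvd_pellQ {p n : ℕ} (hn : 4 ∣ n) (h : p ∣ pellQ n) :
    IsSquare (-1 : ZMod p) := by
  obtain ⟨t, rfl⟩ := hn
  rw [show 4 * t = 2 * (2 * t) by ring] at h
  have hQ : (pellQ (2 * (2 * t)) : ZMod p) = 0 := (ZMod.natCast_eq_zero_iff _ _).2 h
  have hP : 2 * (pellP (2 * (2 * t)) : ZMod p) ^ 2 = -1 := by
    linear_combination (pellQ (2 * (2 * t)) : ZMod p) * hQ -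
      pellQ_sq_sub_two_mul_pellP_sq (R := ZMod p) (2 * (2 * t)) -
      ((even_two_mul (2 * t)).neg_one_pow : (-1 : ZMod p) ^ _ = 1)
  have hQt : 2 * (pellQ (2 * t) : ZMod p) ^ 2 = 1 := by
    have hdouble : (pellQ (2 * (2 * t)) : ZMod p) = pellQ (2 * t) ^ 2 + 2 * pellP (2 * t) ^ 2 := by
      rw [pellQ_two_mul]; push_cast; ring
    linear_combination pellQ_sq_sub_two_mul_pellP_sq (R := ZMod p) (2 * t) - hdouble + hQ +
      ((even_two_mul t).neg_one_pow : (-1 : ZMod p) ^ _ = 1)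
  exact ⟨2 * pellP (2 * (2 * t)) * pellQ (2 * t),
    by linear_combination -(2 * (pellP (2 * (2 * t)) : ZMod p) ^ 2) * hQt - hP⟩

lemma repdigit_two_mod_forty {x m : ℕ} (hm : 2 ≤ m) (h : 9 * x = 2 * (10 ^ m - 1)) :
    x % 40 = 22 := by
  obtain ⟨k, rfl⟩ := Nat.exists_eq_add_of_le' hm
  obtain ⟨j, hj⟩ : 9 ∣ 10 ^ k - 1 := by simpa using Nat.sub_dvd_pow_sub_pow 10 1 k
  have hk : 0 < 10 ^ k := by positivity
  rw [pow_add] at h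
  omega

lemma exists_prime_pow_of_totient_mod_four {N : ℕ} (hodd : Odd N) (hN : 2 < N)
    (h : φ N % 4 = 2) : ∃ p a, p.Prime ∧ p % 4 = 3 ∧ 0 < a ∧ N = p ^ a := by
  obtain ⟨p, hp, hpN⟩ := Nat.exists_prime_and_dvd (by omega : N ≠ 1)
  have hp2 : 2 < p := hp.two_le.lt_of_ne' fun hp2 ↦ by
    subst hp2; exact Nat.not_even_iff_odd.2 hodd (even_iff_two_dvd.2 hpN)
  obtain ⟨a, c, hpc, rfl⟩ := Nat.exists_eq_pow_mul_and_not_dvd (by omega : N ≠ 0) p hp.one_lt.ne'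
  have ha : 0 < a := Nat.pos_of_ne_zero fun ha ↦ by simp_all
  have hc : c = 1 := by
    by_contra hc
    have hc2 : 2 < c := by
      obtain ⟨k, rfl⟩ := Nat.Odd.of_mul_right hodd
      omega
    have hpa : 2 < p ^ a := hp2.trans_le (Nat.le_self_pow ha.ne' p)
    rw [Nat.totient_mul ((Nat.Coprime.pow_left _ ((Nat.Prime.coprime_iff_not_dvd hp).2 hpc)))] at h
    have := Nat.mul_dvd_mul (Nat.totient_even hpa).two_dvd (Nat.totient_even hc2).two_dvd
    omega
  subst hc
  refine ⟨p, a, hp, ?_, ha, mul_one _⟩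
  rw [mul_one, Nat.totient_prime_pow hp ha] at h
  by_contra hp4
  have := Nat.odd_iff.1 (hp.odd_of_ne_two hp2.ne')
  have : 4 ∣ p - 1 := by omega
  have := Dvd.dvd.mul_left this (p ^ (a - 1))
  omega

lemma pow_four_mod_forty {p : ℕ} (h2 : p % 2 = 1) (h5 : p % 5 ≠ 0) : p ^ 4 % 40 = 1 := by
  have key : ∀ x < 40, x % 2 = 1 → x % 5 ≠ 0 → x ^ 4 % 40 = 1 := by decide
  rw [Nat.pow_mod]
  exact key _ (Nat.mod_lt _ (by norm_num)) (by omega) (by omega)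

lemma pow_mod_forty_eq_pow_mod_four {p : ℕ} (h2 : p % 2 = 1) (h5 : p % 5 ≠ 0) (k : ℕ) :
    p ^ k % 40 = (p % 40) ^ (k % 4) % 40 := by
  conv_lhs => rw [← Nat.mod_add_div k 4, pow_add, pow_mul, Nat.mul_mod, Nat.pow_mod (p ^ 4),
    pow_four_mod_forty h2 h5, one_pow, Nat.one_mod, mul_one, Nat.mod_mod, Nat.pow_mod]

lemma prime_pow_mod_of_totient_mod_forty {p a : ℕ} (hp : p.Prime) (hp4 : p % 4 = 3) (ha : 0 < a)
    (h : φ (p ^ a) % 40 = 22) :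
    (p % 8 = 3 → p ^ a % 8 = 1) ∧ (p % 8 = 7 → p ^ a % 40 = 23) := by
  have h5 : p % 5 ≠ 0 := fun h5 ↦ by
    have := (Nat.prime_dvd_prime_iff_eq Nat.prime_five hp).1 (Nat.dvd_of_mod_eq_zero h5)
    omega
  have hpow := pow_mod_forty_eq_pow_mod_four (by omega) h5 (a - 1)
  have hpa : p ^ a = p ^ (a - 1) * p := by rw [← pow_succ, Nat.sub_add_cancel ha]
  rw [Nat.totient_prime_pow hp ha, Nat.mul_mod, hpow] at h
  rw [← Nat.mod_mod_of_dvd (p ^ a) (by norm_num : 8 ∣ 40), hpa, Nat.mul_mod, hpow,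
    ← Nat.mod_mod_of_dvd p (by norm_num : 8 ∣ 40)]
  have hp1 : (p - 1) % 40 = p % 40 - 1 := by omega
  rw [hp1] at h
  have key : ∀ x < 40, ∀ r < 4, x ^ r % 40 * (x - 1) % 40 = 22 →
      (x % 8 = 3 → x ^ r % 40 * x % 40 % 8 = 1) ∧ (x % 8 = 7 → x ^ r % 40 * x % 40 = 23) := by
    decide
  exact key _ (Nat.mod_lt _ (by norm_num)) _ (Nat.mod_lt _ (by norm_num)) h

theorem no_repdigit_two_totient_pellQ :
    ¬ ∃ (n m : ℕ), 16 < n ∧ 2 ≤ m ∧ 9 * Nat.totient (pellQ n) = 2 * (10 ^ m - 1) := by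
  rintro ⟨n, m, hn, hm, h⟩
  have hφ := repdigit_two_mod_forty hm h
  obtain ⟨p, a, hp, hp4, ha, hQ⟩ :=
    exists_prime_pow_of_totient_mod_four (pellQ_odd n) (two_lt_pellQ (by omega)) (by omega)
  have hpQ : p ∣ pellQ n := hQ ▸ dvd_pow_self p ha.ne'
  have hpa := prime_pow_mod_of_totient_mod_forty hp hp4 ha (hQ ▸ hφ)
  rw [← hQ] at hpa
  have := Fact.mk hp
  obtain hn4 | hn4 | hn2 : 4 ∣ n ∨ n % 4 = 2 ∨ n % 2 = 1 := by omega
  · exact ZMod.exists_sq_eq_neg_one_iff.1 (isSquare_neg_one_of_dvd_pellQ hn4 hpQ) hp4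
  · have := pellQ_mod_eight_of_mod_four_eq_two hn4
    omega
  · have hodd : Odd n := Nat.odd_iff.2 hn2
    have := (ZMod.exists_sq_eq_two_iff (by omega)).1 (isSquare_two_of_dvd_pellQ hodd hpQ)
    have := pellQ_mod_forty_ne_of_odd hodd
    omega
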